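/- Let d ≥ 3 and let (G,p) be a cs d-framework that is infinitesimally rigid in ℝ^d and whose point set p(V(G)) affinely spans ℝ^d. If f_1(G) − d·f_0(G) + C(d+1,2) = C(d,2) − d, then every stress ω on (G,p) is symmetric, i.e., ω_e = ω_{−e} for every edge e of G. -/

import Mathlib

open Finset
open scoped Classical

noncomputable section

/-- A finite graph: a finite vertex set together with a finite set of edges,
where each edge is (intended to be) a 2-element subset of the vertex set. -/
structure FinGraph (ι : Type) where
  verts : Finset ι
  edges : Finset (Finset ι)

/-- Every edge is a 2-element subset of the vertex set. -/
def FinGraph.Good {ι : Type} (G : FinGraph ι) : Prop :=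
  ∀ e ∈ G.edges, e ⊆ G.verts ∧ e.card = 2

/-- The standard inner (dot) product on `ℝ^d`. -/
def dotR {d : ℕ} (x y : Fin d → ℝ) : ℝ := ∑ i, x i * y i

/-- An infinitesimal motion of the framework `(G, p)`. -/
def IsMotion {ι : Type} {d : ℕ} (G : FinGraph ι) (p m : ι → Fin d → ℝ) : Prop :=
  ∀ e ∈ G.edges, ∀ u ∈ e, ∀ v ∈ e, dotR (p u - p v) (m u - m v) = 0

/-- The framework `(G, p)` is infinitesimally rigid in `ℝ^d`: every infinitesimal
motion is the restriction of a motion `x ↦ A x + b` of `ℝ^d` with `A` skew-symmetric. -/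
def IsInfRigid {ι : Type} (d : ℕ) (G : FinGraph ι) (p : ι → Fin d → ℝ) : Prop :=
  ∀ m : ι → Fin d → ℝ, IsMotion G p m →
    ∃ (A : Matrix (Fin d) (Fin d) ℝ) (b : Fin d → ℝ),
      A.transpose = -A ∧ ∀ v ∈ G.verts, m v = A.mulVec (p v) + b

/-- A stress on the framework `(G, p)`. -/
def IsStress {ι : Type} {d : ℕ} (G : FinGraph ι) (p : ι → Fin d → ℝ)
    (ω : Finset ι → ℝ) : Prop :=
  ∀ v ∈ G.verts,
    (∑ e ∈ G.edges.filter (fun e => v ∈ e), ∑ u ∈ e.erase v, ω e • (p v - p u)) = 0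

/-- A centrally symmetric framework with free involution `ν` satisfying `p (ν v) = -(p v)`. -/
def IsCSFramework {ι : Type} {d : ℕ} (G : FinGraph ι) (p : ι → Fin d → ℝ) (ν : ι → ι) : Prop :=
  (∀ v ∈ G.verts, ν (ν v) = v) ∧
  (∀ v ∈ G.verts, ν v ∈ G.verts) ∧
  (∀ v ∈ G.verts, ν v ≠ v) ∧
  (∀ e ∈ G.edges, e.image ν ∈ G.edges) ∧
  (∀ e ∈ G.edges, e.image ν ≠ e) ∧
  (∀ v ∈ G.verts, p (ν v) = -(p v))

/-- The convex body spanned by a finite point set. -/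
def polyBody {d : ℕ} (V : Finset (Fin d → ℝ)) : Set (Fin d → ℝ) :=
  convexHull ℝ (V : Set (Fin d → ℝ))

/-- `(f, c)` is a supporting functional for `conv V` exposing the face `F`. -/
def IsSupport {d : ℕ} (V : Finset (Fin d → ℝ)) (f : (Fin d → ℝ) →ₗ[ℝ] ℝ) (c : ℝ)
    (F : Set (Fin d → ℝ)) : Prop :=
  (∀ y ∈ polyBody V, f y ≤ c) ∧ F = {y ∈ polyBody V | f y = c}

/-- A proper face of the polytope `conv V`. -/
def IsProperFace {d : ℕ} (V : Finset (Fin d → ℝ)) (F : Set (Fin d → ℝ)) : Prop :=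
  (∃ f c, IsSupport V f c F) ∧ F ≠ polyBody V

/-- A simplicial `d`-polytope in `ℝ^d`, recorded by its vertex set `V`: the polytope is
`conv V`, it is `d`-dimensional, every element of `V` is a vertex, and every proper face
is a simplex (the convex hull of its affinely independent vertex set). -/
structure SPolytope (d : ℕ) where
  V : Finset (Fin d → ℝ)
  span_top : affineSpan ℝ (V : Set (Fin d → ℝ)) = ⊤
  extreme : ∀ v ∈ V, v ∉ convexHull ℝ ((V.erase v : Finset (Fin d → ℝ)) : Set (Fin d → ℝ))
  simplicial : ∀ F : Set (Fin d → ℝ), IsProperFace V F →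
    AffineIndependent ℝ
      (fun x : {y : Fin d → ℝ // y ∈ (V : Set (Fin d → ℝ)) ∩ F} => (x : Fin d → ℝ)) ∧
    F = convexHull ℝ ((V : Set (Fin d → ℝ)) ∩ F)

/-- `s` is a face of the boundary complex `∂P`. -/
def BFace {d : ℕ} (P : SPolytope d) (s : Finset (Fin d → ℝ)) : Prop :=
  s ⊆ P.V ∧ ∃ F : Set (Fin d → ℝ), IsProperFace P.V F ∧ (s : Set (Fin d → ℝ)) ⊆ F

/-- The number of vertices of `∂P`. -/
def f0 {d : ℕ} (P : SPolytope d) : ℕ := P.V.card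

/-- The edges of `∂P`. -/
def edgeFinset {d : ℕ} (P : SPolytope d) : Finset (Finset (Fin d → ℝ)) :=
  P.V.powerset.filter fun e => e.card = 2 ∧ BFace P e

/-- The number of edges of `∂P`. -/
def f1 {d : ℕ} (P : SPolytope d) : ℕ := (edgeFinset P).card

/-- `g₂(P) = f₁ - d f₀ + C(d+1, 2)`. -/
def g2 {d : ℕ} (P : SPolytope d) : ℤ :=
  (f1 P : ℤ) - (d : ℤ) * (f0 P : ℤ) + ((d + 1).choose 2 : ℤ)

/-- `P` is centrally symmetric. -/
def IsCS {d : ℕ} (P : SPolytope d) : Prop := ∀ v ∈ P.V, -v ∈ P.V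

/-- A missing face of `∂P`. -/
def IsMissingFace {d : ℕ} (P : SPolytope d) (σ : Finset (Fin d → ℝ)) : Prop :=
  σ ⊆ P.V ∧ ¬ BFace P σ ∧ ∀ τ ⊂ σ, BFace P τ

/-- `P` is prime: `∂P` has no missing facet, i.e. no missing face of cardinality `d`. -/
def IsPrimePoly {d : ℕ} (P : SPolytope d) : Prop :=
  ¬ ∃ σ : Finset (Fin d → ℝ), IsMissingFace P σ ∧ σ.card = d

/-- The graph (1-skeleton) of `∂P` as a framework graph. -/
def fullGraph {d : ℕ} (P : SPolytope d) : FinGraph (Fin d → ℝ) :=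
  ⟨P.V, edgeFinset P⟩

/-- The graph (1-skeleton) of the star of the face `τ` in `∂P`. -/
def starGraph {d : ℕ} (P : SPolytope d) (τ : Finset (Fin d → ℝ)) : FinGraph (Fin d → ℝ) :=
  ⟨P.V.filter fun v => BFace P (insert v τ),
   P.V.powerset.filter fun e => e.card = 2 ∧ BFace P (e ∪ τ)⟩

/-- Adjacency in the graph of `∂P`. -/
def Adj {d : ℕ} (P : SPolytope d) (u v : Fin d → ℝ) : Prop :=
  u ≠ v ∧ BFace P {u, v}

/-- `σ` is a face of the link of the face `τ` in `∂P`. -/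
def LinkFace {d : ℕ} (P : SPolytope d) (τ σ : Finset (Fin d → ℝ)) : Prop :=
  Disjoint σ τ ∧ BFace P (σ ∪ τ)

/-- `P` is a `d`-dimensional cross-polytope: its vertex set is `{±b₁, …, ±b_d}`
for some basis `b₁, …, b_d` of `ℝ^d`. -/
def IsCrossPolytope {d : ℕ} (P : SPolytope d) : Prop :=
  ∃ b : Fin d → (Fin d → ℝ), LinearIndependent ℝ b ∧
    (P.V : Set (Fin d → ℝ)) = Set.range b ∪ Set.range (fun i => -(b i))

/-- A facet of `P`: a proper face with `d` vertices. -/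
def IsFacet {d : ℕ} (P : SPolytope d) (F : Set (Fin d → ℝ)) : Prop :=
  IsProperFace P.V F ∧ ((P.V : Set (Fin d → ℝ)) ∩ F).ncard = d

/-- `x` lies beyond exactly one facet of `P`: it is strictly separated from `P` by the
affine hull of one facet `F`, and not separated from `P` by the affine hull of any
other facet. -/
def BeyondExactlyOne {d : ℕ} (P : SPolytope d) (x : Fin d → ℝ) : Prop :=
  ∃ F : Set (Fin d → ℝ), IsFacet P F ∧
    (∀ f c, IsSupport P.V f c F → c < f x) ∧
    (∀ F' : Set (Fin d → ℝ), IsFacet P F' → F' ≠ F →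
      ∀ f c, IsSupport P.V f c F' → f x < c)

/-- `P` is obtained from a `d`-dimensional cross-polytope by symmetric stacking: there is
a sequence of cs simplicial `d`-polytopes starting at a cross-polytope and ending at `P`,
each obtained from the previous one as `conv (P_k ∪ {v, -v})` for a point `v` lying
beyond exactly one facet of `P_k`. -/
def SymmetricStackingFrom {d : ℕ} (P : SPolytope d) : Prop :=
  ∃ (m : ℕ) (Q : Fin (m + 1) → SPolytope d),
    (∀ k, IsCS (Q k)) ∧
    IsCrossPolytope (Q 0) ∧
    Q (Fin.last m) = P ∧
    ∀ k : Fin m, ∃ v : Fin d → ℝ,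
      BeyondExactlyOne (Q (Fin.castSucc k)) v ∧
      polyBody (Q (Fin.succ k)).V =
        convexHull ℝ (polyBody (Q (Fin.castSucc k)).V ∪ {v, -v})

/-- `P` is a stacked `d`-polytope: obtained from a `d`-simplex by repeatedly adding a
point beyond exactly one facet. -/
def IsStacked {d : ℕ} (P : SPolytope d) : Prop :=
  ∃ (m : ℕ) (R : Fin (m + 1) → SPolytope d),
    (R 0).V.card = d + 1 ∧
    R (Fin.last m) = P ∧
    ∀ k : Fin m, ∃ v : Fin d → ℝ,
      BeyondExactlyOne (R (Fin.castSucc k)) v ∧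
      polyBody (R (Fin.succ k)).V =
        convexHull ℝ (polyBody (R (Fin.castSucc k)).V ∪ {v})

/-- Every `d` vertices of `P`, no two of which are antipodal, are affinely independent. -/
def GenPos {d : ℕ} (P : SPolytope d) : Prop :=
  ∀ S : Finset (Fin d → ℝ), S ⊆ P.V → S.card = d →
    (∀ x ∈ S, ∀ y ∈ S, x ≠ -y) →
    AffineIndependent ℝ (fun s : {x : Fin d → ℝ // x ∈ S} => (s : Fin d → ℝ))

/-- The graph of the cone `v₀ * S` over a simplicial complex `S` (a set of finsets):
the vertices of `S` together with `v₀`, and the edges of `S` together with all edges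
from `v₀` to vertices of `S`. -/
def coneGraph {d : ℕ} (P : SPolytope d) (v0 : Fin d → ℝ)
    (S : Set (Finset (Fin d → ℝ))) : FinGraph (Fin d → ℝ) :=
  ⟨insert v0 (P.V.filter fun u => ({u} : Finset (Fin d → ℝ)) ∈ S),
   (P.V.powerset.filter fun e => e.card = 2 ∧ e ∈ S) ∪
     (P.V.filter fun u => ({u} : Finset (Fin d → ℝ)) ∈ S).image
       fun u => ({v0, u} : Finset (Fin d → ℝ))⟩

/-!
Even infinitesimal motions (`m (ν v) = m v`) are sent by the rigidity map to antisymmetric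
edge vectors (`x (ν e) = -x e`). An even motion in the kernel is a translation, because its
linear part `A` satisfies `A (p v) = A (p (ν v)) = -A (p v)` on a spanning set; so the kernel has
dimension at most `d`. The even motions form a space of dimension `d f₀ / 2` and the
antisymmetric edge vectors one of dimension `f₁ / 2`, and the hypothesis on `f₁ - d f₀` says
exactly `f₁ / 2 = d f₀ / 2 - d`. Hence every antisymmetric edge vector is the rigidity image of
an even motion. A stress `ω` is orthogonal to that image, and by the antisymmetry so is
`ω ∘ ν`; the antisymmetric edge vector `ω - ω ∘ ν` is therefore orthogonal to itself.
-/

open Module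

theorem finrank_le_of_forall_apply_eq {K V X M : Type*} [Semiring K] [StrongRankCondition K]
    [AddCommMonoid V] [Module K V] [AddCommMonoid M] [Module K M] [Module.Finite K M]
    (f : V →ₗ[K] (X → M)) (hf : Function.Injective f) (x₀ : X) (hconst : ∀ v x, f v x = f v x₀) :
    finrank K V ≤ finrank K M :=
  LinearMap.finrank_le_finrank_of_injective (f := LinearMap.proj x₀ ∘ₗ f) fun v w h =>
    hf (funext fun x => by simpa [hconst v x, hconst w x] using h)

theorem exists_transversal_of_involutive {X : Type*} [Fintype X] {σ : X → X}
    (hσ : Function.Involutive σ) (hfree : ∀ x, σ x ≠ x) :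
    ∃ R : Finset X, (∀ x, x ∈ R ↔ σ x ∉ R) ∧ 2 * R.card = Fintype.card X := by
  let _ : LinearOrder X := linearOrderOfSTO WellOrderingRel
  have hR : ∀ x, x < σ x ↔ ¬ σ x < σ (σ x) := fun x => by
    rw [hσ x, not_lt]
    exact ⟨le_of_lt, fun h => lt_of_le_of_ne h (hfree x).symm⟩
  refine ⟨univ.filter fun x => x < σ x, fun x => by simpa using hR x, ?_⟩
  have hswap : (univ.filter fun x => ¬ x < σ x).card = (univ.filter fun x => x < σ x).card := by
    refine card_nbij' σ σ (fun x hx => ?_) (fun x hx => ?_) (fun x _ => hσ x) (fun x _ => hσ x) <;>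
      simp only [coe_filter, mem_univ, true_and, Set.mem_ofPred_eq, hσ x] at hx ⊢
    · exact lt_of_le_of_ne (not_lt.1 hx) (hfree x)
    · exact lt_asymm hx
  have hsplit := card_filter_add_card_filter_not (s := univ) (fun x => x < σ x)
  rw [card_univ, hswap] at hsplit
  omega

section Involution

variable {X : Type*}

def evenFuns (σ : X → X) (K M : Type*) [Ring K] [AddCommGroup M] [Module K M] :
    Submodule K (X → M) where
  carrier := {f | ∀ x, f (σ x) = f x}
  add_mem' hf hg x := by simp [hf x, hg x]
  zero_mem' _ := rfl
  smul_mem' c f hf x := by simp [hf x]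

def oddFuns (σ : X → X) (K M : Type*) [Ring K] [AddCommGroup M] [Module K M] :
    Submodule K (X → M) where
  carrier := {f | ∀ x, f (σ x) = -f x}
  add_mem' hf hg x := by simp [hf x, hg x, add_comm]
  zero_mem' _ := by simp
  smul_mem' c f hf x := by simp [hf x]

variable [Fintype X] {σ : X → X}

theorem sum_mul_comp_of_mem_oddFuns {K : Type*} [CommRing K] (hσ : Function.Involutive σ)
    {g : X → K} (hg : g ∈ oddFuns σ K K) (f : X → K) :
    ∑ x, g x * f (σ x) = -∑ x, g x * f x := by
  rw [← Equiv.sum_comp hσ.toPerm, ← sum_neg_distrib]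
  simp [hg _, hσ _]

variable {K M : Type*} [Field K] [AddCommGroup M] [Module K M] [FiniteDimensional K M]
  {R : Finset X}

theorem finrank_oddFuns_le (hR : ∀ x, x ∈ R ↔ σ x ∉ R) :
    finrank K (oddFuns σ K M) ≤ finrank K M * R.card := by
  let restrict : oddFuns σ K M →ₗ[K] (R → M) :=
    (LinearMap.funLeft K M ((↑) : R → X)).comp (oddFuns σ K M).subtype
  have hinj : Function.Injective restrict := by
    rw [← LinearMap.ker_eq_bot, Submodule.eq_bot_iff]
    rintro ⟨f, hf⟩ hfR
    have hzero : ∀ x ∈ R, f x = 0 := fun x hx => congr_fun hfR ⟨x, hx⟩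
    ext x
    by_cases hx : x ∈ R
    · exact hzero x hx
    · simpa [hzero _ (not_not.1 ((hR x).not.1 hx))] using (hf x).symm
  calc finrank K (oddFuns σ K M) ≤ finrank K (R → M) :=
        LinearMap.finrank_le_finrank_of_injective hinj
    _ = finrank K M * R.card := by simp [finrank_pi_fintype, Nat.mul_comm]

theorem le_finrank_evenFuns (hσ : Function.Involutive σ) (hR : ∀ x, x ∈ R ↔ σ x ∉ R) :
    finrank K M * R.card ≤ finrank K (evenFuns σ K M) := by
  let restrict : evenFuns σ K M →ₗ[K] (R → M) :=
    (LinearMap.funLeft K M ((↑) : R → X)).comp (evenFuns σ K M).subtype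
  have hsurj : Function.Surjective restrict := by
    intro g
    let f : X → M := fun x => if h : x ∈ R then g ⟨x, h⟩ else
      if h' : σ x ∈ R then g ⟨σ x, h'⟩ else 0
    refine ⟨⟨f, fun x => ?_⟩, funext fun x => by simp [restrict, f, LinearMap.funLeft]⟩
    by_cases hx : x ∈ R
    · simp [f, hx, (hR x).1 hx, hσ x]
    · simp [f, hx, not_not.1 ((hR x).not.1 hx)]
  calc finrank K M * R.card = finrank K (R → M) := by simp [finrank_pi_fintype, Nat.mul_comm]
    _ ≤ finrank K (evenFuns σ K M) := LinearMap.finrank_le_finrank_of_surjective hsurj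

end Involution

theorem dotR_eq_dotProduct {d : ℕ} (x y : Fin d → ℝ) : dotR x y = x ⬝ᵥ y := rfl

namespace FinGraph

variable {ι : Type} {d : ℕ} (G : FinGraph ι) (p : ι → Fin d → ℝ)

def extendByZero : (G.verts → Fin d → ℝ) →ₗ[ℝ] (ι → Fin d → ℝ) :=
  LinearMap.pi fun a => if h : a ∈ G.verts then LinearMap.proj ⟨a, h⟩ else 0

theorem extendByZero_apply_of_mem (m : G.verts → Fin d → ℝ) {a : ι} (ha : a ∈ G.verts) :
    G.extendByZero m a = m ⟨a, ha⟩ := by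
  simp [extendByZero, ha]

/-- Twice the usual rigidity map: the double sum runs over both orderings of each edge. -/
def rigidityMap : (ι → Fin d → ℝ) →ₗ[ℝ] (G.edges → ℝ) where
  toFun q e := ∑ a ∈ e.1, ∑ b ∈ e.1, (p a - p b) ⬝ᵥ (q a - q b)
  map_add' q q' := by
    ext e
    simp [add_sub_add_comm, dotProduct_add, sum_add_distrib]
  map_smul' c q := by
    ext e
    simp only [Pi.smul_apply, ← smul_sub, dotProduct_smul, smul_eq_mul, mul_sum,
      RingHom.id_apply]

variable {G p}

theorem rigidityMap_apply (q : ι → Fin d → ℝ) (e : G.edges) :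
    G.rigidityMap p q e = ∑ a ∈ e.1, ∑ b ∈ e.1, (p a - p b) ⬝ᵥ (q a - q b) := rfl

theorem isMotion_of_rigidityMap_eq_zero (hG : G.Good) {q : ι → Fin d → ℝ}
    (hq : G.rigidityMap p q = 0) : IsMotion G p q := by
  intro e he u hu v hv
  obtain ⟨x, y, hxy, rfl⟩ := card_eq_two.1 (hG e he).2
  have hyx : (p y - p x) ⬝ᵥ (q y - q x) = (p x - p y) ⬝ᵥ (q x - q y) := by
    rw [← neg_sub (p x), ← neg_sub (q x), neg_dotProduct, dotProduct_neg, neg_neg]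
  have hedge : (p x - p y) ⬝ᵥ (q x - q y) = 0 := by
    have h0 := congr_fun hq ⟨_, he⟩
    simp only [rigidityMap_apply, sum_pair hxy, sub_self, zero_dotProduct, zero_add, add_zero,
      hyx, Pi.zero_apply] at h0
    linarith
  rw [dotR_eq_dotProduct]
  simp only [mem_insert, mem_singleton] at hu hv
  rcases hu with rfl | rfl <;> rcases hv with rfl | rfl <;> simp [hedge, hyx]

theorem _root_.IsStress.sum_smul_sum_eq_zero {ω : Finset ι → ℝ} (hω : IsStress G p ω) {v : ι}
    (hv : v ∈ G.verts) : ∑ e ∈ G.edges.filter (v ∈ ·), ω e • ∑ u ∈ e, (p v - p u) = 0 := by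
  rw [← hω v hv]
  refine sum_congr rfl fun e he => ?_
  rw [smul_sum, sum_erase]
  simp

theorem sum_sum_sub_dotProduct_sub (s : Finset ι) (q : ι → Fin d → ℝ) :
    ∑ a ∈ s, ∑ b ∈ s, (p a - p b) ⬝ᵥ (q a - q b) =
      2 * ∑ a ∈ s, (∑ b ∈ s, (p a - p b)) ⬝ᵥ q a := by
  have hswap : ∑ a ∈ s, ∑ b ∈ s, (p a - p b) ⬝ᵥ q b =
      -∑ a ∈ s, ∑ b ∈ s, (p a - p b) ⬝ᵥ q a := by
    rw [sum_comm]
    simp only [← sum_neg_distrib, ← neg_dotProduct, neg_sub]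
  simp only [sum_dotProduct]
  simp only [dotProduct_sub, sum_sub_distrib, hswap]
  ring

theorem sum_rigidityMap_mul_eq_zero (hG : G.Good) {ω : Finset ι → ℝ} (hω : IsStress G p ω)
    (q : ι → Fin d → ℝ) : ∑ e, G.rigidityMap p q e * ω e = 0 := by
  have hvert : ∀ e a, e ∈ G.edges ∧ a ∈ e ↔ e ∈ G.edges.filter (a ∈ ·) ∧ a ∈ G.verts :=
    fun e a => ⟨fun h => ⟨mem_filter.2 h, (hG e h.1).1 h.2⟩, fun h => mem_filter.1 h.1⟩
  calc ∑ e, G.rigidityMap p q e * ω e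
      = ∑ e ∈ G.edges, ω e * (2 * ∑ a ∈ e, (∑ b ∈ e, (p a - p b)) ⬝ᵥ q a) := by
        rw [← sum_coe_sort G.edges]
        simp only [rigidityMap_apply, sum_sum_sub_dotProduct_sub, mul_comm]
    _ = 2 * ∑ a ∈ G.verts,
          (∑ e ∈ G.edges.filter (a ∈ ·), ω e • ∑ b ∈ e, (p a - p b)) ⬝ᵥ q a := by
        simp only [sum_dotProduct, smul_dotProduct, smul_eq_mul, mul_sum]
        rw [sum_comm' hvert]
        exact sum_congr rfl fun a _ => sum_congr rfl fun e _ => sum_congr rfl fun b _ => by ring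
    _ = 0 := by
        rw [sum_eq_zero fun a ha => by rw [hω.sum_smul_sum_eq_zero ha, zero_dotProduct], mul_zero]

end FinGraph

namespace IsCSFramework

variable {ι : Type} {d : ℕ} {G : FinGraph ι} {p : ι → Fin d → ℝ} {ν : ι → ι}
  (hcs : IsCSFramework G p ν)

def vertexSwap : G.verts → G.verts := fun v => ⟨ν v, hcs.2.1 v v.2⟩

def edgeSwap : G.edges → G.edges := fun e => ⟨e.1.image ν, hcs.2.2.2.1 e e.2⟩

include hcs in
theorem injOn : Set.InjOn ν G.verts := fun u hu v hv h => by
  rw [← hcs.1 u hu, h, hcs.1 v hv]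

theorem vertexSwap_involutive : Function.Involutive hcs.vertexSwap :=
  fun v => Subtype.ext (hcs.1 v v.2)

theorem vertexSwap_ne (v : G.verts) : hcs.vertexSwap v ≠ v :=
  fun h => hcs.2.2.1 v v.2 (congrArg Subtype.val h)

theorem edgeSwap_involutive (hG : G.Good) : Function.Involutive hcs.edgeSwap := fun e => by
  refine Subtype.ext ?_
  simp only [edgeSwap, image_image]
  exact (image_congr fun a ha => hcs.1 a ((hG e e.2).1 ha)).trans image_id

theorem edgeSwap_ne (e : G.edges) : hcs.edgeSwap e ≠ e :=
  fun h => hcs.2.2.2.2.1 e e.2 (congrArg Subtype.val h)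

theorem rigidityMap_mem_oddFuns (hG : G.Good) {q : ι → Fin d → ℝ}
    (hq : ∀ v ∈ G.verts, q (ν v) = q v) : G.rigidityMap p q ∈ oddFuns hcs.edgeSwap ℝ ℝ := by
  intro e
  have he : ∀ a ∈ e.1, a ∈ G.verts := fun a ha => (hG e e.2).1 ha
  have hinj : Set.InjOn ν e.1 := hcs.injOn.mono fun a ha => he a ha
  simp only [FinGraph.rigidityMap_apply, edgeSwap, sum_image hinj, ← sum_neg_distrib]
  refine sum_congr rfl fun a ha => sum_congr rfl fun b hb => ?_
  rw [hcs.2.2.2.2.2 a (he a ha), hcs.2.2.2.2.2 b (he b hb), hq a (he a ha), hq b (he b hb),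
    neg_sub_neg, ← neg_sub, neg_dotProduct]

theorem extendByZero_apply_swap {m : G.verts → Fin d → ℝ}
    (hm : m ∈ evenFuns hcs.vertexSwap ℝ (Fin d → ℝ)) {v : ι} (hv : v ∈ G.verts) :
    G.extendByZero m (ν v) = G.extendByZero m v := by
  rw [G.extendByZero_apply_of_mem m hv, G.extendByZero_apply_of_mem m (hcs.2.1 v hv)]
  exact hm ⟨v, hv⟩

include hcs in
theorem exists_eq_const_of_isMotion (hrig : IsInfRigid d G p)
    (hspan : affineSpan ℝ (p '' G.verts) = ⊤) {q : ι → Fin d → ℝ} (hq : IsMotion G p q)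
    (heven : ∀ v ∈ G.verts, q (ν v) = q v) : ∃ b, ∀ v ∈ G.verts, q v = b := by
  obtain ⟨A, b, -, hAb⟩ := hrig q hq
  refine ⟨b, fun v hv => ?_⟩
  have hker : Submodule.span ℝ (p '' G.verts) ≤ LinearMap.ker A.mulVecLin := by
    rw [Submodule.span_le]
    rintro _ ⟨u, hu, rfl⟩
    have h := heven u hu
    rw [hAb u hu, hAb (ν u) (hcs.2.1 u hu), hcs.2.2.2.2.2 u hu, Matrix.mulVec_neg,
      add_left_inj, neg_eq_iff_add_eq_zero, ← two_smul ℝ, smul_eq_zero] at h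
    simpa using h
  have hAv : A.mulVec (p v) = 0 := hker (affineSpan_subset_span (by simp [hspan]))
  rw [hAb v hv, hAv, zero_add]

def evenRigidityMap : evenFuns hcs.vertexSwap ℝ (Fin d → ℝ) →ₗ[ℝ] (G.edges → ℝ) :=
  G.rigidityMap p ∘ₗ G.extendByZero ∘ₗ (evenFuns hcs.vertexSwap ℝ (Fin d → ℝ)).subtype

variable (hG : G.Good) (hrig : IsInfRigid d G p) (hspan : affineSpan ℝ (p '' G.verts) = ⊤)
include hcs hG hrig hspan

theorem finrank_ker_evenRigidityMap_le :
    finrank ℝ (LinearMap.ker hcs.evenRigidityMap) ≤ d := by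
  obtain ⟨v₀, hv₀⟩ : G.verts.Nonempty := by
    simpa [hspan] using (affineSpan_nonempty (k := ℝ) (s := p '' G.verts))
  let incl : LinearMap.ker hcs.evenRigidityMap →ₗ[ℝ] (G.verts → Fin d → ℝ) :=
    (evenFuns hcs.vertexSwap ℝ (Fin d → ℝ)).subtype ∘ₗ
      (LinearMap.ker hcs.evenRigidityMap).subtype
  have hconst : ∀ m v, incl m v = incl m ⟨v₀, hv₀⟩ := by
    rintro ⟨⟨m, heven⟩, hm⟩ ⟨v, hv⟩
    have hmotion := FinGraph.isMotion_of_rigidityMap_eq_zero hG (LinearMap.mem_ker.1 hm)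
    obtain ⟨b, hb⟩ : ∃ b, ∀ w ∈ G.verts, G.extendByZero m w = b :=
      hcs.exists_eq_const_of_isMotion hrig hspan hmotion
        fun v hv => hcs.extendByZero_apply_swap heven hv
    show m ⟨v, hv⟩ = m ⟨v₀, hv₀⟩
    rw [← G.extendByZero_apply_of_mem m hv, ← G.extendByZero_apply_of_mem m hv₀, hb v hv,
      hb v₀ hv₀]
  have hinj : Function.Injective incl := by
    simp only [incl, LinearMap.coe_comp]
    exact (Submodule.injective_subtype _).comp (Submodule.injective_subtype _)
  simpa using finrank_le_of_forall_apply_eq (M := Fin d → ℝ) incl hinj _ hconst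

theorem range_evenRigidityMap (hcount : G.edges.card + 2 * d = d * G.verts.card) :
    LinearMap.range hcs.evenRigidityMap = oddFuns hcs.edgeSwap ℝ ℝ := by
  obtain ⟨RV, hRV, hRVcard⟩ :=
    exists_transversal_of_involutive hcs.vertexSwap_involutive hcs.vertexSwap_ne
  obtain ⟨RE, hRE, hREcard⟩ :=
    exists_transversal_of_involutive (hcs.edgeSwap_involutive hG) hcs.edgeSwap_ne
  have hle : LinearMap.range hcs.evenRigidityMap ≤ oddFuns hcs.edgeSwap ℝ ℝ := by
    rintro _ ⟨⟨m, heven⟩, rfl⟩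
    exact hcs.rigidityMap_mem_oddFuns hG fun v hv => hcs.extendByZero_apply_swap heven hv
  refine Submodule.eq_of_le_of_finrank_le hle ?_
  have hodd := finrank_oddFuns_le (K := ℝ) (M := ℝ) hRE
  have heven := le_finrank_evenFuns (K := ℝ) (M := Fin d → ℝ) hcs.vertexSwap_involutive hRV
  have hrank := LinearMap.finrank_range_add_finrank_ker hcs.evenRigidityMap
  have hker := hcs.finrank_ker_evenRigidityMap_le hG hrig hspan
  simp only [finrank_self, finrank_fin_fun, one_mul, Fintype.card_coe] at *
  have : d * G.verts.card = 2 * (d * RV.card) := by rw [← hRVcard]; ring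
  omega

theorem apply_image_eq_of_isStress (hcount : G.edges.card + 2 * d = d * G.verts.card)
    {ω : Finset ι → ℝ} (hω : IsStress G p ω) {e : Finset ι} (he : e ∈ G.edges) :
    ω (e.image ν) = ω e := by
  let η : G.edges → ℝ := fun e => ω e - ω (hcs.edgeSwap e)
  have hη : η ∈ oddFuns hcs.edgeSwap ℝ ℝ := fun e => by
    simp only [η, hcs.edgeSwap_involutive hG e, neg_sub]
  rw [← hcs.range_evenRigidityMap hG hrig hspan hcount] at hη
  obtain ⟨m, hm⟩ := hη
  have hstress : ∑ e, hcs.evenRigidityMap m e * ω e = 0 :=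
    FinGraph.sum_rigidityMap_mul_eq_zero hG hω _
  have hodd : hcs.evenRigidityMap m ∈ oddFuns hcs.edgeSwap ℝ ℝ :=
    hcs.rigidityMap_mem_oddFuns hG fun v hv => hcs.extendByZero_apply_swap m.2 hv
  have hswap := sum_mul_comp_of_mem_oddFuns (hcs.edgeSwap_involutive hG) hodd fun e => ω e
  have hsq : ∑ e, η e * η e = 0 := by
    nth_rewrite 1 [← hm]
    simp only [η, mul_sub, sum_sub_distrib, hswap, hstress, neg_zero, sub_zero]
  have := (sum_eq_zero_iff_of_nonneg (fun _ _ => mul_self_nonneg _)).1 hsq ⟨e, he⟩ (mem_univ _)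
  exact (sub_eq_zero.1 (mul_self_eq_zero.1 this)).symm

end IsCSFramework

theorem stmt3_general {ι : Type} {d : ℕ} (G : FinGraph ι) (p : ι → Fin d → ℝ)
    (ν : ι → ι) (hGood : G.Good) (hcs : IsCSFramework G p ν)
    (hrig : IsInfRigid d G p)
    (hspan : affineSpan ℝ (p '' (G.verts : Set ι)) = ⊤)
    (hg2 : (G.edges.card : ℤ) - (d : ℤ) * (G.verts.card : ℤ) + ((d + 1).choose 2 : ℤ) =
      (d.choose 2 : ℤ) - (d : ℤ)) :
    ∀ ω : Finset ι → ℝ, IsStress G p ω → ∀ e ∈ G.edges, ω (e.image ν) = ω e := by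
  have hcount : G.edges.card + 2 * d = d * G.verts.card := by
    rw [Nat.choose_succ_succ', Nat.choose_one_right] at hg2
    push_cast at hg2
    zify
    linarith
  exact fun ω hω e he => hcs.apply_image_eq_of_isStress hGood hrig hspan hcount hω he

/-- If `d ≥ 3` and `(G, p)` is an infinitesimally rigid, affinely spanning
cs `d`-framework with `f₁(G) - d f₀(G) + C(d+1,2) = C(d,2) - d`, then every stress on
`(G, p)` is symmetric: `ω_e = ω_{-e}` for every edge `e`. -/
theorem stmt3 {ι : Type} {d : ℕ} (hd : 3 ≤ d) (G : FinGraph ι) (p : ι → Fin d → ℝ)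
    (ν : ι → ι) (hGood : G.Good) (hcs : IsCSFramework G p ν)
    (hrig : IsInfRigid d G p)
    (hspan : affineSpan ℝ (p '' (G.verts : Set ι)) = ⊤)
    (hg2 : (G.edges.card : ℤ) - (d : ℤ) * (G.verts.card : ℤ) + ((d + 1).choose 2 : ℤ) =
      (d.choose 2 : ℤ) - (d : ℤ)) :
    ∀ ω : Finset ι → ℝ, IsStress G p ω → ∀ e ∈ G.edges, ω (e.image ν) = ω e :=
  stmt3_general G p ν hGood hcs hrig hspan hg2
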